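/- arXiv:0910.1909 — 3 statements merged into one kernel-verified Lean document; each statement's English description precedes it below -/
import Mathlib

section
/- Every element of the orthogonal group O(n) over the reals is a product of two involutions (and hence is conjugate in O(n) to its own inverse). -/
/-!
For orthogonal `f`, the symmetric map `f + f⁻¹` commutes with `f`, so an eigenvector `v` (eigenvalue
`μ`) spans together with `f v` a plane `W` invariant under `f` and `f⁻¹`, on which `f + f⁻¹ = μ`.
There `f - μ/2` is skew, and a reflection of `W` anticommutes with it, hence conjugates `f` to
`f⁻¹`. Induction on `Wᗮ` gives a symmetric involution `b` with `b f b = f⁻¹` on the whole space,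
and `f = b * (b * f)` is a product of two orthogonal involutions.
-/

open Module LinearMap Submodule
open scoped RealInnerProductSpace

section StarMonoid

variable {M N : Type*} [Monoid M] [StarMul M] [Monoid N] [StarMul N]

/-- For `f` with `star f * f = 1`, a witness `b` exhibits `f = b * (b * f)` as a product of two
unitary involutions. -/
def HasSelfAdjointReverser (f : M) : Prop :=
  ∃ b : M, IsSelfAdjoint b ∧ b * b = 1 ∧ b * f * b = star f

theorem HasSelfAdjointReverser.map {F : Type*} [FunLike F M N] [MonoidHomClass F M N]
    [StarHomClass F M N] (φ : F) {f : M} (hf : HasSelfAdjointReverser f) :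
    HasSelfAdjointReverser (φ f) := by
  obtain ⟨b, hb, hbb, hbf⟩ := hf
  exact ⟨φ b, hb.map φ, by rw [← map_mul, hbb, map_one],
    by rw [← map_mul, ← map_mul, hbf, map_star]⟩

theorem HasSelfAdjointReverser.exists_eq_mul {f : M} (hf : star f * f = 1)
    (h : HasSelfAdjointReverser f) :
    ∃ b c : M, star b * b = 1 ∧ star c * c = 1 ∧ b * b = 1 ∧ c * c = 1 ∧ f = b * c := by
  obtain ⟨b, hb, hbb, hbf⟩ := h
  have hcc : b * f * (b * f) = 1 := by rw [← mul_assoc, hbf, hf]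
  have hc : IsSelfAdjoint (b * f) := by
    rw [IsSelfAdjoint, star_mul, hb.star_eq, ← hbf, mul_assoc, mul_assoc, hbb, mul_one]
  refine ⟨b, b * f, ?_, ?_, hbb, hcc, ?_⟩
  · rw [hb.star_eq, hbb]
  · rw [hc.star_eq, hcc]
  · rw [← mul_assoc, hbb, one_mul]

end StarMonoid

theorem HasSelfAdjointReverser.add_smul_one {R : Type*} [Ring R] [StarRing R] [Algebra ℝ R]
    [StarModule ℝ R] {f : R} (h : HasSelfAdjointReverser f) (c : ℝ) :
    HasSelfAdjointReverser (f + c • 1) := by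
  obtain ⟨b, hb, hbb, hbf⟩ := h
  refine ⟨b, hb, hbb, ?_⟩
  rw [mul_add, add_mul, hbf, mul_smul_one, smul_mul_assoc, hbb, star_add, star_smul, star_one,
    star_trivial c]

theorem apply_mem_span_pair {R M : Type*} [Semiring R] [AddCommMonoid M] [Module R M]
    {g : M →ₗ[R] M} {v w : M} (hv : g v ∈ span R {v, w}) (hw : g w ∈ span R {v, w}) :
    ∀ x ∈ span R {v, w}, g x ∈ span R {v, w} := fun _ hx ↦
  (span_le (p := (span R {v, w}).comap g)).mpr
    (Set.insert_subset_iff.mpr ⟨hv, by simpa using hw⟩) hx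

section InnerProductSpace

variable {E : Type*} [NormedAddCommGroup E] [InnerProductSpace ℝ E] [FiniteDimensional ℝ E]

theorem LinearMap.star_restrict {f : E →ₗ[ℝ] E} {W : Submodule ℝ E} (hf : ∀ x ∈ W, f x ∈ W)
    (hf' : ∀ x ∈ W, star f x ∈ W) : star (f.restrict hf) = (star f).restrict hf' := by
  refine ((eq_adjoint_iff _ _).mpr fun x y ↦ ?_).symm
  exact adjoint_inner_left f _ _

theorem LinearMap.star_restrict_mul_restrict {f : E →ₗ[ℝ] E} (hf : star f * f = 1)
    {W : Submodule ℝ E} (hW : ∀ x ∈ W, f x ∈ W) (hW' : ∀ x ∈ W, star f x ∈ W) :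
    star (f.restrict hW) * f.restrict hW = 1 := by
  rw [star_restrict hW hW']
  ext x
  exact LinearMap.congr_fun hf x

theorem LinearMap.mem_orthogonal_of_star {f : E →ₗ[ℝ] E} {W : Submodule ℝ E}
    (hW : ∀ x ∈ W, star f x ∈ W) : ∀ x ∈ Wᗮ, f x ∈ Wᗮ := fun x hx y hy ↦ by
  rw [← adjoint_inner_left]
  exact hx _ (hW y hy)

theorem LinearMap.IsSymmetric.of_orthogonal {b : E →ₗ[ℝ] E} {W : Submodule ℝ E}
    {b₁ : W →ₗ[ℝ] W} {b₂ : Wᗮ →ₗ[ℝ] Wᗮ} (hb₁ : ∀ x : W, b x = b₁ x) (hb₂ : ∀ x : Wᗮ, b x = b₂ x)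
    (h₁ : b₁.IsSymmetric) (h₂ : b₂.IsSymmetric) : b.IsSymmetric := by
  intro x y
  obtain ⟨x₁, hx₁, x₂, hx₂, rfl⟩ := W.exists_add_mem_mem_orthogonal x
  obtain ⟨y₁, hy₁, y₂, hy₂, rfl⟩ := W.exists_add_mem_mem_orthogonal y
  have hW (z : W) : b z ∈ W := hb₁ z ▸ (b₁ z).2
  have hW' (z : Wᗮ) : b z ∈ Wᗮ := hb₂ z ▸ (b₂ z).2
  have e₁ : ⟪b x₁, y₁⟫ = ⟪x₁, b y₁⟫ := by
    simpa only [coe_inner, ← hb₁] using h₁ ⟨x₁, hx₁⟩ ⟨y₁, hy₁⟩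
  have e₂ : ⟪b x₂, y₂⟫ = ⟪x₂, b y₂⟫ := by
    simpa only [coe_inner, ← hb₂] using h₂ ⟨x₂, hx₂⟩ ⟨y₂, hy₂⟩
  simp only [map_add, inner_add_left, inner_add_right, e₁, e₂,
    inner_right_of_mem_orthogonal (hW ⟨x₁, hx₁⟩) hy₂,
    inner_right_of_mem_orthogonal hx₁ (hW' ⟨y₂, hy₂⟩),
    inner_left_of_mem_orthogonal (hW ⟨y₁, hy₁⟩) hx₂,
    inner_left_of_mem_orthogonal hy₁ (hW' ⟨x₂, hx₂⟩)]

theorem eqOn_reverser_of_restrict {b f : E →ₗ[ℝ] E} {V : Submodule ℝ E} {b₁ : V →ₗ[ℝ] V}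
    (hb : ∀ x : V, b x = b₁ x) (hf : ∀ x ∈ V, f x ∈ V) (hf' : ∀ x ∈ V, star f x ∈ V)
    (hb₁ : b₁ * b₁ = 1) (hb₁f : b₁ * f.restrict hf * b₁ = (star f).restrict hf') :
    Set.EqOn ⇑(b * b) ⇑(1 : E →ₗ[ℝ] E) V ∧ Set.EqOn ⇑(b * f * b) ⇑(star f) V := by
  refine ⟨fun x hx ↦ ?_, fun x hx ↦ ?_⟩
  · calc b (b x) = b₁ (b₁ ⟨x, hx⟩) := by rw [hb ⟨x, hx⟩]; exact hb _
      _ = x := congr_arg Subtype.val (LinearMap.congr_fun hb₁ ⟨x, hx⟩)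
  · calc b (f (b x)) = b₁ (f.restrict hf (b₁ ⟨x, hx⟩)) := by
          rw [hb ⟨x, hx⟩]; exact hb (f.restrict hf (b₁ ⟨x, hx⟩))
      _ = star f x := congr_arg Subtype.val (LinearMap.congr_fun hb₁f ⟨x, hx⟩)

theorem HasSelfAdjointReverser.of_restrict {f : E →ₗ[ℝ] E} {W : Submodule ℝ E}
    (hW : ∀ x ∈ W, f x ∈ W) (hW' : ∀ x ∈ W, star f x ∈ W)
    (h₁ : HasSelfAdjointReverser (f.restrict hW))
    (h₂ : HasSelfAdjointReverser (f.restrict (mem_orthogonal_of_star hW'))) :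
    HasSelfAdjointReverser f := by
  have hW'_orth : ∀ x ∈ Wᗮ, star f x ∈ Wᗮ := mem_orthogonal_of_star (by simpa using hW)
  obtain ⟨b₁, hb₁, hb₁b₁, hb₁f⟩ := h₁
  obtain ⟨b₂, hb₂, hb₂b₂, hb₂f⟩ := h₂
  rw [star_restrict hW hW'] at hb₁f
  rw [star_restrict _ hW'_orth] at hb₂f
  let b := ofIsCompl W.isCompl_orthogonal (W.subtype ∘ₗ b₁) (Wᗮ.subtype ∘ₗ b₂)
  have hb_W (x : W) : b x = b₁ x := ofIsCompl_apply_left _ x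
  have hb_orth (x : Wᗮ) : b x = b₂ x := ofIsCompl_apply_right _ x
  obtain ⟨hbb_W, hbfb_W⟩ := eqOn_reverser_of_restrict hb_W hW hW' hb₁b₁ hb₁f
  obtain ⟨hbb_orth, hbfb_orth⟩ := eqOn_reverser_of_restrict hb_orth _ hW'_orth hb₂b₂ hb₂f
  have hb : b.IsSymmetric := .of_orthogonal hb_W hb_orth
    ((isSymmetric_iff_isSelfAdjoint b₁).mpr hb₁) ((isSymmetric_iff_isSelfAdjoint b₂).mpr hb₂)
  have hc := W.isCompl_orthogonal.codisjoint
  exact ⟨b, (isSymmetric_iff_isSelfAdjoint b).mp hb, ext_on_codisjoint hc hbb_W hbb_orth,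
    ext_on_codisjoint hc hbfb_W hbfb_orth⟩

theorem isSelfAdjoint_reflection_toLinearMap (K : Submodule ℝ E) :
    IsSelfAdjoint (K.reflection.toLinearEquiv : E →ₗ[ℝ] E) := by
  rw [IsSelfAdjoint, star_eq_adjoint, LinearIsometryEquiv.adjoint_toLinearMap_eq_symm,
    Submodule.reflection_symm]

theorem reflection_toLinearMap_mul_self (K : Submodule ℝ E) :
    (K.reflection.toLinearEquiv : E →ₗ[ℝ] E) * K.reflection = 1 :=
  LinearMap.ext K.reflection_reflection

theorem inner_self_apply_eq_zero_of_star_eq_neg {Y : E →ₗ[ℝ] E} (hY : star Y = -Y) (x : E) :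
    ⟪x, Y x⟫ = 0 := by
  have h := adjoint_inner_left Y x x
  rw [← star_eq_adjoint, hY, LinearMap.neg_apply, inner_neg_left, real_inner_comm] at h
  linarith

theorem hasSelfAdjointReverser_of_star_eq_neg {Y : E →ₗ[ℝ] E} (hY : star Y = -Y) {κ : ℝ}
    (hYY : Y * Y = κ • 1) (hE : finrank ℝ E ≤ 2) : HasSelfAdjointReverser Y := by
  by_cases hY0 : Y = 0
  · exact ⟨1, .one _, one_mul 1, by simp [hY0]⟩
  obtain ⟨e, he⟩ : ∃ e, Y e ≠ 0 := by
    by_contra! h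
    exact hY0 (LinearMap.ext h)
  set u := Y e
  have hYu : Y u = κ • e := by simpa using LinearMap.congr_fun hYY e
  have heu : ⟪u, e⟫ = 0 := by
    rw [real_inner_comm]; exact inner_self_apply_eq_zero_of_star_eq_neg hY e
  have hspan : span ℝ (Set.range ![e, u]) = ⊤ := by
    have hli : LinearIndependent ℝ ![e, u] := by
      refine linearIndependent_of_ne_zero_of_inner_eq_zero ?_ ?_
      · intro i
        fin_cases i
        · exact fun h ↦ he (by simp_all [u])
        · exact he
      · intro i j hij
        fin_cases i <;> fin_cases j <;> simp_all [real_inner_comm]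
    refine hli.span_eq_top_of_card_eq_finrank' (le_antisymm ?_ ?_)
    · exact hli.fintype_card_le_finrank
    · simpa using hE
  -- the reflection of the plane `span {e, Y e}` fixing `e` anticommutes with `Y`
  let b : E →ₗ[ℝ] E := (ℝ ∙ u)ᗮ.reflection.toLinearEquiv
  have hbe : b e = e :=
    reflection_mem_subspace_eq_self (mem_orthogonal_singleton_iff_inner_right.mpr heu)
  have hbu : b u = -u := reflection_orthogonalComplement_singleton_eq_neg u
  refine ⟨b, isSelfAdjoint_reflection_toLinearMap _, reflection_toLinearMap_mul_self _, ?_⟩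
  rw [hY]
  refine ext_on_range hspan fun i ↦ ?_
  fin_cases i
  · simp [hbe, hbu, u]
  · simp [hbe, hbu, hYu]

theorem invariant_span_pair_of_eigenvector {f : E →ₗ[ℝ] E} (hf : star f * f = 1) {μ : ℝ} {v : E}
    (hv : (f + star f) v = μ • v) :
    (∀ x ∈ span ℝ {v, f v}, f x ∈ span ℝ {v, f v}) ∧
      (∀ x ∈ span ℝ {v, f v}, star f x ∈ span ℝ {v, f v}) ∧
      ∀ x ∈ span ℝ {v, f v}, (f + star f) x = μ • x := by
  have hf' : f * star f = 1 := mul_eq_one_comm.mp hf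
  have hstar_v : star f v = μ • v - f v := eq_sub_of_add_eq' hv
  have hstar_fv : star f (f v) = v := LinearMap.congr_fun hf v
  have hffv : f (f v) = μ • f v - v := by
    have := LinearMap.congr_fun hf' v
    rw [Module.End.mul_apply, hstar_v, map_sub, map_smul, Module.End.one_apply] at this
    linear_combination (norm := module) -this
  have hv_mem : v ∈ span ℝ {v, f v} := subset_span (by simp)
  have hfv_mem : f v ∈ span ℝ {v, f v} := subset_span (by simp)
  refine ⟨apply_mem_span_pair hfv_mem ?_, apply_mem_span_pair ?_ ?_, fun x hx ↦ ?_⟩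
  · rw [hffv]; exact sub_mem (smul_mem _ _ hfv_mem) hv_mem
  · rw [hstar_v]; exact sub_mem (smul_mem _ _ hv_mem) hfv_mem
  · rw [hstar_fv]; exact hv_mem
  · have hle : span ℝ {v, f v} ≤ End.eigenspace (f + star f) μ := by
      refine span_le.mpr (Set.insert_subset_iff.mpr ⟨End.mem_eigenspace_iff.mpr hv, ?_⟩)
      simp only [Set.singleton_subset_iff, SetLike.mem_coe, End.mem_eigenspace_iff,
        LinearMap.add_apply, hffv, hstar_fv]
      abel
    exact End.mem_eigenspace_iff.mp (hle hx)

theorem hasSelfAdjointReverser_of_add_star_eq_smul {f : E →ₗ[ℝ] E} (hf : star f * f = 1)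
    {μ : ℝ} (hμ : f + star f = μ • 1) (hE : finrank ℝ E ≤ 2) : HasSelfAdjointReverser f := by
  have hstar : star f = μ • 1 - f := eq_sub_of_add_eq' hμ
  have hY : star (f - (μ / 2) • 1) = -(f - (μ / 2) • 1) := by
    rw [star_sub, star_smul, star_one, star_trivial (μ / 2), hstar]
    module
  have hYY : (f - (μ / 2) • 1) * (f - (μ / 2) • 1) = (μ ^ 2 / 4 - 1) • (1 : E →ₗ[ℝ] E) := by
    rw [hstar, sub_mul, smul_mul_assoc, one_mul] at hf
    have hff : f * f = μ • f - 1 := by linear_combination (norm := module) -hf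
    simp only [sub_mul, mul_sub, smul_mul_assoc, mul_smul_comm, one_mul, mul_one, hff]
    module
  simpa using (hasSelfAdjointReverser_of_star_eq_neg hY hYY hE).add_smul_one (μ / 2)

theorem hasSelfAdjointReverser_of_star_mul_self_eq_one (f : E →ₗ[ℝ] E) (hf : star f * f = 1) :
    HasSelfAdjointReverser f := by
  induction hn : finrank ℝ E using Nat.strong_induction_on generalizing E with
  | _ n ih =>
  rcases subsingleton_or_nontrivial E with hE | hE
  · exact ⟨1, .one _, one_mul 1, Subsingleton.elim _ _⟩
  have hS : (f + star f).IsSymmetric :=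
    (isSymmetric_iff_isSelfAdjoint _).mpr (IsSelfAdjoint.add_star_self f)
  obtain ⟨μ, hμ⟩ : ∃ μ, End.HasEigenvalue (f + star f) μ :=
    ⟨_, hS.hasEigenvalue_iSup_of_finiteDimensional⟩
  obtain ⟨v, hv⟩ := hμ.exists_hasEigenvector
  set W := span ℝ {v, f v}
  obtain ⟨hW, hW', hWμ⟩ := invariant_span_pair_of_eigenvector hf hv.apply_eq_smul
  have hW_pos : 0 < finrank ℝ W :=
    finrank_pos_iff_exists_ne_zero.mpr ⟨⟨v, subset_span (by simp)⟩, by simpa using hv.2⟩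
  have hW_le : finrank ℝ W ≤ 2 := by
    classical
    exact (finrank_span_le_card _).trans (by simpa using Finset.card_le_two)
  have hadd : f.restrict hW + star (f.restrict hW) = μ • 1 := by
    rw [star_restrict hW hW']
    ext x
    exact hWμ x x.2
  refine .of_restrict hW hW' (hasSelfAdjointReverser_of_add_star_eq_smul
    (star_restrict_mul_restrict hf hW hW') hadd hW_le) (ih _ ?_ _ (star_restrict_mul_restrict hf _
      (mem_orthogonal_of_star (by simpa using hW))) rfl)
  change finrank ℝ Wᗮ < n
  have := W.finrank_add_finrank_orthogonal
  omega

end InnerProductSpace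

open Matrix

/-- Every element of the orthogonal group `O(n)` over `ℝ` is a product of two
involutions of `O(n)` (hence conjugate in `O(n)` to its own inverse). -/
theorem orthogonal_strongly_real (n : ℕ) (A : Matrix (Fin n) (Fin n) ℝ)
    (hA : Aᵀ * A = 1) :
    ∃ B C : Matrix (Fin n) (Fin n) ℝ,
      Bᵀ * B = 1 ∧ Cᵀ * C = 1 ∧ B * B = 1 ∧ C * C = 1 ∧ A = B * C := by
  have hstar (M : Matrix (Fin n) (Fin n) ℝ) : star M = Mᵀ := by
    rw [Matrix.star_eq_conjTranspose, Matrix.conjTranspose_eq_transpose_of_trivial]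
  let φ := LinearMap.toMatrixOrthonormal (EuclideanSpace.basisFun (Fin n) ℝ)
  have hf : star (φ.symm A) * φ.symm A = 1 := by
    rw [← map_star, ← map_mul, hstar, hA, map_one]
  have h := (hasSelfAdjointReverser_of_star_mul_self_eq_one _ hf).map φ
  rw [StarAlgEquiv.apply_symm_apply] at h
  simpa only [hstar] using h.exists_eq_mul (by rw [hstar, hA])
end

section
/- An element T ∈ SO(n) is conjugate in SO(n) to its inverse if and only if either n ≢ 2 (mod 4), or T has 1 or −1 as an eigenvalue. -/
/-!
Every orthogonal `T` is conjugate to `T⁻¹` by an orthogonal `S`. If `v` is an eigenvector of the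
symmetric map `T + T⁻¹`, the plane spanned by `v` and `T v` is `T`-invariant, and the reflection
exchanging `T v` with `T⁻¹ v` fixes `v` and conjugates `T` into `T⁻¹` on that plane; the orthogonal
complement of the plane is again invariant, so one inducts. When `T` has no eigenvalue `±1`, every
step is a genuine reflection on a plane, so `n = 2m` and `det S = (-1)^m`.

In that case any other orthogonal `S'` with `S' T S'⁻¹ = T⁻¹` satisfies `det S' = det S`: `S⁻¹ S'`
commutes with `T`, hence with the complex structure `J = N (Nᵀ N)^{-1/2}` of the invertible skew
matrix `N = T - Tᵀ`, and a real matrix commuting with a complex structure has determinant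
`|det_ℂ|² ≥ 0`. If `T` does have an eigenvector `v` for `±1`, the reflection in `v⊥` commutes with
`T` and has determinant `-1`, so it can correct the sign of `det S`.
-/

open Matrix Module Submodule

namespace LinearIsometryEquiv

variable {E : Type*} [NormedAddCommGroup E] [InnerProductSpace ℝ E]

def IsInvariant (T : E ≃ₗᵢ[ℝ] E) (V : Submodule ℝ E) : Prop :=
  ∀ x ∈ V, T x ∈ V ∧ T.symm x ∈ V

def ReversesOn (S T : E ≃ₗᵢ[ℝ] E) (V : Submodule ℝ E) : Prop :=
  (∀ x ∈ V, S (T x) = T.symm (S x)) ∧ ∀ x ∈ Vᗮ, S x = x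

variable {T : E ≃ₗᵢ[ℝ] E}

theorem IsInvariant.orthogonal {V : Submodule ℝ E} (hV : T.IsInvariant V) : T.IsInvariant Vᗮ := by
  refine fun x hx => ⟨fun y hy => ?_, fun y hy => ?_⟩
  · rw [← T.symm.inner_map_map, symm_apply_apply]
    exact hx _ (hV y hy).2
  · rw [← T.inner_map_map, apply_symm_apply]
    exact hx _ (hV y hy).1

theorem IsInvariant.inf {V W : Submodule ℝ E} (hV : T.IsInvariant V) (hW : T.IsInvariant W) :
    T.IsInvariant (V ⊓ W) :=
  fun x hx => ⟨⟨(hV x hx.1).1, (hW x hx.2).1⟩, ⟨(hV x hx.1).2, (hW x hx.2).2⟩⟩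

theorem isInvariant_span_singleton {w : E} (hw : T w = w ∨ T w = -w) : T.IsInvariant (ℝ ∙ w) := by
  intro x hx
  obtain ⟨a, rfl⟩ := mem_span_singleton.1 hx
  have hsymm : T.symm w = w ∨ T.symm w = -w := hw.imp (fun h => by rw [T.symm_apply_eq, h])
    (fun h => by rw [T.symm_apply_eq, map_neg, h, neg_neg])
  have hmem : ∀ {y : E}, y = w ∨ y = -w → y ∈ ℝ ∙ w := by
    rintro y (h | h) <;> rw [h]
    exacts [mem_span_singleton_self w, neg_mem (mem_span_singleton_self w)]
  rw [map_smul, map_smul]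
  exact ⟨smul_mem _ a (hmem hw), smul_mem _ a (hmem hsymm)⟩

section Block

variable {v : E} {μ : ℝ}

theorem apply_apply_of_add_symm_eq_smul (hv : T v + T.symm v = μ • v) : T (T v) = μ • T v - v := by
  rw [eq_sub_iff_add_eq, ← T.apply_symm_apply v, ← map_add, ← map_smul, T.apply_symm_apply, hv]

theorem symm_apply_symm_apply_of_add_symm_eq_smul (hv : T v + T.symm v = μ • v) :
    T.symm (T.symm v) = μ • T.symm v - v := by
  rw [eq_sub_iff_add_eq, ← T.symm_apply_apply v, ← map_add, ← map_smul, T.symm_apply_apply,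
    add_comm, hv]

theorem isInvariant_span_pair (hv : T v + T.symm v = μ • v) :
    T.IsInvariant (span ℝ {v, T v}) := by
  intro x hx
  obtain ⟨a, b, rfl⟩ := mem_span_pair.1 hx
  have hsymm : T.symm v = μ • v - T v := by rw [← hv]; abel
  refine ⟨mem_span_pair.2 ⟨-b, a + b * μ, ?_⟩, mem_span_pair.2 ⟨a * μ + b, -a, ?_⟩⟩
  · rw [map_add, map_smul, map_smul, apply_apply_of_add_symm_eq_smul hv]
    module
  · rw [map_add, map_smul, map_smul, hsymm, symm_apply_apply]
    module

theorem reversesOn_span_pair (hv : T v + T.symm v = μ • v) :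
    (ℝ ∙ (T v - T.symm v))ᗮ.reflection.ReversesOn T (span ℝ {v, T v}) := by
  set R := (ℝ ∙ (T v - T.symm v))ᗮ.reflection
  have hRv : R v = v := by
    apply reflection_mem_subspace_eq_self
    rw [mem_orthogonal_singleton_iff_inner_right, inner_sub_left, T.symm.inner_map_eq_flip,
      symm_symm, real_inner_comm (T v) v, sub_self]
  have hRTv : R (T v) = T.symm v := reflection_sub (by simp)
  refine ⟨fun x hx => ?_, fun x hx => ?_⟩
  · obtain ⟨a, b, rfl⟩ := mem_span_pair.1 hx
    simp only [map_add, map_smul, apply_apply_of_add_symm_eq_smul hv, map_sub, hRv, hRTv,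
      symm_apply_symm_apply_of_add_symm_eq_smul hv]
  · apply reflection_mem_subspace_eq_self
    refine orthogonal_le (span_le.2 ?_) hx
    rw [Set.singleton_subset_iff, SetLike.mem_coe, show T.symm v = μ • v - T v by rw [← hv]; abel]
    exact sub_mem (subset_span (by simp)) (sub_mem (smul_mem _ _ (subset_span (by simp)))
      (subset_span (by simp)))

theorem apply_sub_symm_apply_ne_zero {V : Submodule ℝ E} (hV : T.IsInvariant V)
    (hT : ∀ u ∈ V, T u = u ∨ T u = -u → u = 0) (hvV : v ∈ V) (hv0 : v ≠ 0) :
    T v - T.symm v ≠ 0 := by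
  intro h
  have hTT : T (T v) = v := by rw [sub_eq_zero.1 h, apply_symm_apply]
  by_cases hu : T v + v = 0
  · exact hv0 (hT v hvV (Or.inr (eq_neg_of_add_eq_zero_left hu)))
  · exact hu (hT _ (add_mem (hV v hvV).1 hvV) (Or.inl (by rw [map_add, hTT, add_comm])))

theorem finrank_span_pair_eq_two {V : Submodule ℝ E} (hT : ∀ u ∈ V, T u = u ∨ T u = -u → u = 0)
    (hvV : v ∈ V) (hv0 : v ≠ 0) : finrank ℝ (span ℝ {v, T v}) = 2 := by
  have hind : LinearIndependent ℝ ![v, T v] := by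
    refine LinearIndependent.pair_iff.2 fun s t hst => ?_
    obtain rfl | ht := eq_or_ne t 0
    · rw [zero_smul, add_zero, smul_eq_zero] at hst
      exact ⟨hst.resolve_right hv0, rfl⟩
    · have hTv : T v = (-s / t) • v := by
        refine smul_right_injective E ht ?_
        dsimp only
        rw [smul_smul, mul_div_cancel₀ _ ht, neg_smul, eq_neg_of_add_eq_zero_right hst]
      have habs : |-s / t| = 1 := by
        have := T.norm_map v
        rw [hTv, norm_smul, Real.norm_eq_abs] at this
        exact (mul_eq_right₀ (norm_ne_zero_iff.2 hv0)).1 this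
      refine absurd (hT v hvV ?_) hv0
      rcases abs_eq (zero_le_one' ℝ) |>.1 habs with h | h
      · exact Or.inl (by rw [hTv, h, one_smul])
      · exact Or.inr (by rw [hTv, h, neg_one_smul])
  have := finrank_span_eq_card hind
  rwa [Matrix.range_cons_cons_empty, Fintype.card_fin] at this

end Block

variable [FiniteDimensional ℝ E]

theorem apply_mem_of_forall_mem_orthogonal_apply_eq (S : E ≃ₗᵢ[ℝ] E) {K : Submodule ℝ E}
    (hS : ∀ x ∈ Kᗮ, S x = x) {x : E} (hx : x ∈ K) : S x ∈ K := by
  rw [← K.orthogonal_orthogonal]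
  intro y hy
  rw [← hS y hy, S.inner_map_map]
  exact K.le_orthogonal_orthogonal hx y hy

theorem ReversesOn.mul {R S : E ≃ₗᵢ[ℝ] E} {W V : Submodule ℝ E} (hWV : W ≤ V)
    (hW : T.IsInvariant W) (hV : T.IsInvariant V)
    (hR : R.ReversesOn T W) (hS : S.ReversesOn T (Wᗮ ⊓ V)) : (R * S).ReversesOn T V := by
  have hWS : ∀ y ∈ W, S y = y := fun y hy =>
    hS.2 y (orthogonal_le inf_le_left (W.le_orthogonal_orthogonal hy))
  have hSV : ∀ z ∈ Wᗮ ⊓ V, S z ∈ Wᗮ ⊓ V := fun z hz =>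
    apply_mem_of_forall_mem_orthogonal_apply_eq S hS.2 hz
  refine ⟨fun x hx => ?_, fun x hx => ?_⟩
  · rw [← sup_orthogonal_inf_of_hasOrthogonalProjection hWV] at hx
    obtain ⟨y, hy, z, hz, rfl⟩ := mem_sup.1 hx
    have hTz : T.symm (S z) ∈ Wᗮ ⊓ V := (hW.orthogonal.inf hV _ (hSV z hz)).2
    simp only [coe_mul, Function.comp_apply, map_add, hWS y hy, hWS _ (hW y hy).1, hR.1 y hy,
      hS.1 z hz, hR.2 _ hTz.1, hR.2 _ (hSV z hz).1]
  · rw [coe_mul, Function.comp_apply, hS.2 x (orthogonal_le inf_le_right hx),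
      hR.2 x (orthogonal_le hWV hx)]

theorem exists_mem_ne_zero_add_symm_eq_smul {V : Submodule ℝ E} (hV : T.IsInvariant V)
    (hV0 : V ≠ ⊥) : ∃ v ∈ V, v ≠ 0 ∧ ∃ μ : ℝ, T v + T.symm v = μ • v := by
  have hC : (T.toLinearEquiv.toLinearMap + T.symm.toLinearEquiv.toLinearMap).IsSymmetric :=
    fun x y => by
      simp only [LinearMap.add_apply, LinearEquiv.coe_coe, coe_toLinearEquiv, inner_add_left,
        inner_add_right, T.inner_map_eq_flip, T.symm.inner_map_eq_flip, symm_symm, add_comm]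
  have := nontrivial_iff_ne_bot.2 hV0
  obtain ⟨w, hw⟩ := (hC.restrict_invariant fun x hx => add_mem (hV x hx).1 (hV x hx).2)
    |>.hasEigenvalue_iSup_of_finiteDimensional.exists_hasEigenvector
  exact ⟨w, w.2, by simpa using hw.2, _, congrArg Subtype.val hw.apply_eq_smul⟩

theorem exists_reversesOn (V : Submodule ℝ E) (hV : T.IsInvariant V) :
    ∃ S : E ≃ₗᵢ[ℝ] E, S.ReversesOn T V ∧ ((∀ u ∈ V, T u = u ∨ T u = -u → u = 0) →
      ∃ m, finrank ℝ V = 2 * m ∧ LinearMap.det S.toLinearEquiv.toLinearMap = (-1) ^ m) := by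
  induction hd : finrank ℝ V using Nat.strong_induction_on generalizing V with
  | _ d ih =>
  obtain rfl | hV0 := eq_or_ne V ⊥
  · refine ⟨1, ⟨fun x hx => by simp [(mem_bot ℝ).1 hx], fun x _ => rfl⟩, fun _ => ⟨0, ?_, ?_⟩⟩
    · rw [← hd, finrank_bot]
    · exact LinearMap.det_id
  obtain ⟨v, hvV, hv0, μ, hv⟩ := exists_mem_ne_zero_add_symm_eq_smul hV hV0
  set W := span ℝ {v, T v}
  have hWV : W ≤ V := span_le.2 (Set.insert_subset hvV (Set.singleton_subset_iff.2 (hV v hvV).1))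
  have hW := isInvariant_span_pair hv
  have hdim := finrank_add_inf_finrank_orthogonal hWV
  have hW0 : 0 < finrank ℝ W :=
    one_le_finrank_iff.2 ((Submodule.ne_bot_iff _).2 ⟨v, subset_span (by simp), hv0⟩)
  obtain ⟨S, hS, hdet⟩ := ih _ (by omega) (Wᗮ ⊓ V) (hW.orthogonal.inf hV) rfl
  refine ⟨_ * S, (reversesOn_span_pair hv).mul hWV hW hV hS, fun hT => ?_⟩
  obtain ⟨m, hm, hSdet⟩ := hdet fun u hu => hT u hu.2
  refine ⟨m + 1, by rw [← hd, ← hdim, hm, finrank_span_pair_eq_two hT hvV hv0]; ring, ?_⟩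
  change LinearMap.det (_ ∘ₗ _) = _
  rw [LinearMap.det_comp, hSdet, det_reflection, orthogonal_orthogonal,
    finrank_span_singleton (apply_sub_symm_apply_ne_zero hV hT hvV hv0)]
  ring

theorem exists_mul_eq_inv_mul (T : E ≃ₗᵢ[ℝ] E) :
    ∃ S : E ≃ₗᵢ[ℝ] E, S * T = T⁻¹ * S ∧ ((∀ u, T u = u ∨ T u = -u → u = 0) →
      ∃ m, finrank ℝ E = 2 * m ∧ LinearMap.det S.toLinearEquiv.toLinearMap = (-1) ^ m) := by
  obtain ⟨S, hS, hdet⟩ := exists_reversesOn (T := T) ⊤ fun _ _ => ⟨trivial, trivial⟩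
  refine ⟨S, LinearIsometryEquiv.ext fun x => hS.1 x trivial, fun hT => ?_⟩
  obtain ⟨m, hm, hSdet⟩ := hdet fun u _ => hT u
  exact ⟨m, finrank_top ℝ E ▸ hm, hSdet⟩

theorem IsInvariant.commute_reflection {K : Submodule ℝ E} (hK : T.IsInvariant K) :
    Commute K.reflection T := by
  refine LinearIsometryEquiv.ext fun x => ?_
  obtain ⟨y, hy, z, hz, rfl⟩ :=
    mem_sup.1 (K.sup_orthogonal_of_hasOrthogonalProjection ▸ mem_top : x ∈ K ⊔ Kᗮ)
  simp only [coe_mul, Function.comp_apply, map_add, reflection_mem_subspace_eq_self hy,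
    reflection_mem_subspace_eq_self (hK y hy).1, map_neg,
    reflection_mem_subspace_orthogonalComplement_eq_neg hz,
    reflection_mem_subspace_orthogonalComplement_eq_neg (hK.orthogonal z hz).1]

end LinearIsometryEquiv

namespace Matrix

variable {ι : Type*} [Fintype ι] [DecidableEq ι]

noncomputable def orthogonalGroupEquiv :
    orthogonalGroup ι ℝ ≃* (EuclideanSpace ℝ ι ≃ₗᵢ[ℝ] EuclideanSpace ℝ ι) :=
  (Unitary.mapEquiv (.ofClass (toEuclideanCLM (n := ι) (𝕜 := ℝ)))).toMulEquiv.trans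
    Unitary.linearIsometryEquiv

theorem orthogonalGroupEquiv_apply (U : orthogonalGroup ι ℝ) (x : EuclideanSpace ℝ ι) :
    orthogonalGroupEquiv U x = WithLp.toLp 2 ((U : Matrix ι ι ℝ) *ᵥ x.ofLp) := rfl

theorem det_orthogonalGroupEquiv (U : orthogonalGroup ι ℝ) :
    LinearMap.det (orthogonalGroupEquiv U).toLinearEquiv.toLinearMap = (U : Matrix ι ι ℝ).det := by
  change LinearMap.det (toLpLin 2 2 (U : Matrix ι ι ℝ)) = _
  rw [toLpLin_eq_toLin, LinearMap.det_toLin]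

theorem exists_orthogonal_mul_eq_transpose_mul {T : Matrix ι ι ℝ} (hT : Tᵀ * T = 1) :
    ∃ S : Matrix ι ι ℝ, Sᵀ * S = 1 ∧ S * T = Tᵀ * S ∧
      ((¬∃ v : ι → ℝ, v ≠ 0 ∧ (T *ᵥ v = v ∨ T *ᵥ v = -v)) →
        ∃ m, Fintype.card ι = 2 * m ∧ S.det = (-1) ^ m) := by
  set T' : orthogonalGroup ι ℝ := ⟨T, (mem_orthogonalGroup_iff' ..).2 hT⟩
  obtain ⟨S', hS'T, hdet⟩ := (orthogonalGroupEquiv T').exists_mul_eq_inv_mul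
  set S := orthogonalGroupEquiv.symm S'
  have hST : S * T' = T'⁻¹ * S := orthogonalGroupEquiv.injective (by simpa [S] using hS'T)
  refine ⟨S, (mem_orthogonalGroup_iff' ..).1 S.2,
    by simpa [T', star_eq_conjTranspose] using congrArg Subtype.val hST, fun hfix => ?_⟩
  obtain ⟨m, hm, hdetS'⟩ := hdet fun u hu => by
    by_contra hu0
    refine hfix ⟨u.ofLp, fun h => hu0 (by simpa using congrArg (WithLp.toLp 2) h), ?_⟩
    simpa [orthogonalGroupEquiv_apply, T'] using
      hu.imp (congrArg WithLp.ofLp) (congrArg WithLp.ofLp)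
  refine ⟨m, by simpa using hm, ?_⟩
  rw [← det_orthogonalGroupEquiv, MulEquiv.apply_symm_apply, hdetS']

theorem exists_orthogonal_commute_det_eq_neg_one {T : Matrix ι ι ℝ} (hT : Tᵀ * T = 1)
    {v : ι → ℝ} (hv0 : v ≠ 0) (hv : T *ᵥ v = v ∨ T *ᵥ v = -v) :
    ∃ R : Matrix ι ι ℝ, Rᵀ * R = 1 ∧ R * T = T * R ∧ R.det = -1 := by
  set T' : orthogonalGroup ι ℝ := ⟨T, (mem_orthogonalGroup_iff' ..).2 hT⟩
  set w : EuclideanSpace ℝ ι := WithLp.toLp 2 v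
  have hw : orthogonalGroupEquiv T' w = w ∨ orthogonalGroupEquiv T' w = -w :=
    hv.imp (fun h => by simp [orthogonalGroupEquiv_apply, T', w, h])
      (fun h => by simp [orthogonalGroupEquiv_apply, T', w, h])
  set R := orthogonalGroupEquiv.symm (ℝ ∙ w)ᗮ.reflection
  have hRT : R * T' = T' * R := orthogonalGroupEquiv.injective (by
    simpa [R] using
      (LinearIsometryEquiv.isInvariant_span_singleton hw).orthogonal.commute_reflection.eq)
  refine ⟨R, (mem_orthogonalGroup_iff' ..).1 R.2, congrArg Subtype.val hRT, ?_⟩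
  rw [← det_orthogonalGroupEquiv, MulEquiv.apply_symm_apply, det_reflection,
    orthogonal_orthogonal, finrank_span_singleton (by simpa [w] using hv0), pow_one]

theorem exists_orthogonal_det_eq_one_mul_eq_transpose_mul {T : Matrix ι ι ℝ} (hT : Tᵀ * T = 1)
    (hfix : ∃ v : ι → ℝ, v ≠ 0 ∧ (T *ᵥ v = v ∨ T *ᵥ v = -v)) :
    ∃ S : Matrix ι ι ℝ, Sᵀ * S = 1 ∧ S.det = 1 ∧ S * T = Tᵀ * S := by
  obtain ⟨S, hS, hST, -⟩ := exists_orthogonal_mul_eq_transpose_mul hT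
  obtain ⟨v, hv0, hv⟩ := hfix
  obtain ⟨R, hR, hRT, hRdet⟩ := exists_orthogonal_commute_det_eq_neg_one hT hv0 hv
  have hdet : S.det * S.det = 1 := by simpa using congrArg det hS
  rcases mul_self_eq_one_iff.1 hdet with h | h
  · exact ⟨S, hS, h, hST⟩
  · refine ⟨S * R, ?_, by rw [det_mul, h, hRdet]; norm_num, ?_⟩
    · rw [transpose_mul, mul_assoc, ← mul_assoc Sᵀ, hS, one_mul, hR]
    · rw [mul_assoc, hRT, ← mul_assoc, hST, mul_assoc]

-- With `A = iJ` (so `A² = 1`) and `Z = (X + 1) + A (X - 1)`, one has `conj Z = (X + 1) - A (X - 1)`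
-- and `Z * conj Z = 4 X`, so `4 ^ n * det X = |det Z|²`.
theorem det_nonneg_of_commute_of_mul_self_eq_neg_one {J X : Matrix ι ι ℝ} (hJ : J * J = -1)
    (hX : Commute X J) : 0 ≤ X.det := by
  set f := (algebraMap ℝ ℂ).mapMatrix (m := ι)
  set A := Complex.I • f J
  set U := f X + 1
  set V := f X - 1
  have hA : A * A = 1 := by
    rw [smul_mul_smul_comm, ← map_mul, hJ, map_neg, map_one, Complex.I_mul_I, neg_one_smul,
      neg_neg]
  have hAX : Commute A (f X) := (hX.symm.map f).smul_left Complex.I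
  have hAV : Commute A V := hAX.sub_right (Commute.one_right A)
  have hUV : Commute U V := ((Commute.refl _).sub_right (Commute.one_right _)).add_left
    (Commute.one_left V)
  have hUAV : Commute U (A * V) := (hAX.add_right (Commute.one_right A)).symm.mul_right hUV
  have hconj : (starRingEnd ℂ).mapMatrix (U + A * V) = U - A * V := by
    have hreal : ∀ M, (starRingEnd ℂ).mapMatrix (f M) = f M := fun M => by ext; simp [f]
    have hA' : (starRingEnd ℂ).mapMatrix A = -A := by ext; simp [A, f]
    simp only [U, V, map_add, map_sub, map_mul, map_one, hreal, hA', neg_mul, ← sub_eq_add_neg]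
  have hprod : (U + A * V) * (U - A * V) = (4 : ℂ) • f X := by
    rw [← hUAV.mul_self_sub_mul_self_eq, ← mul_assoc, mul_assoc A V A, ← hAV.eq, ← mul_assoc, hA,
      one_mul]
    simp only [U, V]
    noncomm_ring
    exact (ofNat_smul_eq_nsmul ..).symm
  have key : Complex.normSq (U + A * V).det = 4 ^ Fintype.card ι * X.det := by
    have h := congrArg det hprod
    rw [← hconj, det_mul, ← RingHom.map_det, Complex.mul_conj, det_smul, ← RingHom.map_det,
      Complex.coe_algebraMap] at h
    exact_mod_cast h
  exact (mul_nonneg_iff_of_pos_left (by positivity)).1 (key ▸ Complex.normSq_nonneg _)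

open scoped MatrixOrder in
theorem exists_mul_self_eq_neg_one_forall_commute {N : Matrix ι ι ℝ} (hN : Nᵀ = -N)
    (hNu : IsUnit N) : ∃ J : Matrix ι ι ℝ, J * J = -1 ∧ ∀ X, Commute X N → Commute X J := by
  have hB : 0 ≤ Nᵀ * N := by
    simpa [conjTranspose_eq_transpose_of_trivial] using (posSemidef_conjTranspose_mul_self N).nonneg
  set G := CFC.sqrt (Nᵀ * N)
  have hGG : G * G = -(N * N) := by rw [CFC.sqrt_mul_sqrt_self _ hB, hN, neg_mul]
  have hcomm : ∀ X, Commute X N → Commute X G := fun X hX => by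
    have hXB : Commute X (Nᵀ * N) := by rw [hN, neg_mul]; exact (hX.mul_right hX).neg_right
    exact (hXB.symm.cfcₙ_nnreal NNReal.sqrt).symm
  obtain ⟨u, hu⟩ : IsUnit G := by
    have : IsUnit (G * G) := hGG ▸ (hNu.mul hNu).neg
    rw [isUnit_iff_isUnit_det, det_mul, IsUnit.mul_iff] at this
    exact (isUnit_iff_isUnit_det G).2 this.1
  refine ⟨N * ↑u⁻¹, ?_, fun X hX => hX.mul_right (hu ▸ hcomm X hX).units_inv_right⟩
  have hNu' : Commute N ↑u⁻¹ := (hu ▸ hcomm N (Commute.refl N)).units_inv_right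
  calc N * ↑u⁻¹ * (N * ↑u⁻¹) = -(↑u * ↑u) * (↑u⁻¹ * ↑u⁻¹) := by
        rw [hu, hGG, neg_neg, mul_assoc, ← mul_assoc _ N, ← hNu'.eq]
        simp only [mul_assoc]
    _ = -1 := by simp [mul_assoc]

theorem isUnit_sub_transpose {K : Type*} [Field K] {T : Matrix ι ι K} (hT : Tᵀ * T = 1)
    (hfix : ¬∃ v : ι → K, v ≠ 0 ∧ (T *ᵥ v = v ∨ T *ᵥ v = -v)) : IsUnit (T - Tᵀ) := by
  rw [isUnit_iff_isUnit_det, isUnit_iff_ne_zero]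
  intro hdet
  obtain ⟨v, hv0, hv⟩ := exists_mulVec_eq_zero_iff.2 hdet
  have hTv : T *ᵥ v = Tᵀ *ᵥ v := by rwa [sub_mulVec, sub_eq_zero] at hv
  have hTTv : T *ᵥ (T *ᵥ v) = v := by
    rw [hTv, mulVec_mulVec, mul_eq_one_comm.1 hT, one_mulVec]
  by_cases hw : T *ᵥ v + v = 0
  · exact hfix ⟨v, hv0, Or.inr (eq_neg_of_add_eq_zero_left hw)⟩
  · exact hfix ⟨T *ᵥ v + v, hw, Or.inl (by rw [mulVec_add, hTTv, add_comm])⟩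

theorem commute_transpose_of_commute {R : Type*} [CommRing R] {T X : Matrix ι ι R}
    (hT : Tᵀ * T = 1) (hX : Commute X T) : Commute X Tᵀ := by
  calc X * Tᵀ = Tᵀ * (T * X) * Tᵀ := by rw [← mul_assoc, hT, one_mul]
    _ = Tᵀ * X * (T * Tᵀ) := by rw [← hX.eq]; simp only [mul_assoc]
    _ = Tᵀ * X := by rw [mul_eq_one_comm.1 hT, mul_one]

theorem det_eq_of_mul_eq_transpose_mul {T S S' : Matrix ι ι ℝ} (hT : Tᵀ * T = 1)
    (hfix : ¬∃ v : ι → ℝ, v ≠ 0 ∧ (T *ᵥ v = v ∨ T *ᵥ v = -v))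
    (hS : Sᵀ * S = 1) (hS' : S'ᵀ * S' = 1) (hST : S * T = Tᵀ * S) (hS'T : S' * T = Tᵀ * S') :
    S.det = S'.det := by
  obtain ⟨J, hJ, hJc⟩ := exists_mul_self_eq_neg_one_forall_commute
    (by rw [transpose_sub, transpose_transpose, neg_sub]) (isUnit_sub_transpose hT hfix)
  have hSTt : Sᵀ * Tᵀ = T * Sᵀ :=
    calc Sᵀ * Tᵀ = Sᵀ * (Tᵀ * S) * Sᵀ := by
          rw [← mul_assoc, mul_assoc _ S, mul_eq_one_comm.1 hS, mul_one]
      _ = T * Sᵀ := by rw [← hST, ← mul_assoc, hS, one_mul]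
  have hX : Commute (Sᵀ * S') T := by
    rw [Commute, SemiconjBy, mul_assoc, hS'T, ← mul_assoc, hSTt, mul_assoc]
  have hdet := det_nonneg_of_commute_of_mul_self_eq_neg_one hJ
    (hJc _ (hX.sub_right (commute_transpose_of_commute hT hX)))
  have h1 : S.det * S.det = 1 := by simpa using congrArg det hS
  have h2 : S'.det * S'.det = 1 := by simpa using congrArg det hS'
  rw [det_mul, det_transpose] at hdet
  have hab : S.det * S'.det = 1 := by
    have : (S.det * S'.det) * (S.det * S'.det) = 1 := by rw [mul_mul_mul_comm, h1, h2, one_mul]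
    nlinarith
  linear_combination S'.det * hab - S.det * h2

theorem mul_mul_inv_eq_inv_iff {R : Type*} [CommRing R] {S T : Matrix ι ι R} (hT : Tᵀ * T = 1)
    (hS : Sᵀ * S = 1) : S * T * S⁻¹ = T⁻¹ ↔ S * T = Tᵀ * S := by
  rw [inv_eq_left_inv hS, inv_eq_left_inv hT]
  constructor
  · intro h
    rw [← h, mul_assoc, hS, mul_one]
  · intro h
    rw [h, mul_assoc, mul_eq_one_comm.1 hS, mul_one]

end Matrix

theorem real_in_SOn_iff_general (n : ℕ)
    (T : Matrix (Fin n) (Fin n) ℝ) (hTo : Tᵀ * T = 1) :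
    (∃ S : Matrix (Fin n) (Fin n) ℝ,
        Sᵀ * S = 1 ∧ S.det = 1 ∧ S * T * S⁻¹ = T⁻¹) ↔
      (¬ (n % 4 = 2) ∨
        ∃ v : Fin n → ℝ, v ≠ 0 ∧ (T.mulVec v = v ∨ T.mulVec v = -v)) := by
  by_cases hfix : ∃ v : Fin n → ℝ, v ≠ 0 ∧ (T *ᵥ v = v ∨ T *ᵥ v = -v)
  · obtain ⟨S, hS, hdet, hST⟩ := exists_orthogonal_det_eq_one_mul_eq_transpose_mul hTo hfix
    exact iff_of_true ⟨S, hS, hdet, (mul_mul_inv_eq_inv_iff hTo hS).2 hST⟩ (Or.inr hfix)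
  obtain ⟨S₀, hS₀, hS₀T, hdet₀⟩ := exists_orthogonal_mul_eq_transpose_mul hTo
  obtain ⟨m, hm, hdetS₀⟩ := hdet₀ hfix
  rw [Fintype.card_fin] at hm
  rw [or_iff_left hfix]
  constructor
  · rintro ⟨S, hS, hdet, hST⟩
    rw [det_eq_of_mul_eq_transpose_mul hTo hfix hS hS₀ ((mul_mul_inv_eq_inv_iff hTo hS).1 hST)
      hS₀T, hdetS₀] at hdet
    obtain ⟨k, rfl⟩ := (neg_one_pow_eq_one_iff_even (by norm_num)).1 hdet
    omega
  · intro hn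
    refine ⟨S₀, hS₀, ?_, (mul_mul_inv_eq_inv_iff hTo hS₀).2 hS₀T⟩
    rw [hdetS₀, (Nat.even_iff.2 (by omega : m % 2 = 0)).neg_one_pow]

/-- An element `T ∈ SO(n)` is conjugate in `SO(n)` to its inverse if and only
if either `n ≢ 2 (mod 4)`, or `T` has `1` or `−1` as an eigenvalue. -/
theorem real_in_SOn_iff (n : ℕ)
    (T : Matrix (Fin n) (Fin n) ℝ) (hTo : Tᵀ * T = 1) (hTdet : T.det = 1) :
    (∃ S : Matrix (Fin n) (Fin n) ℝ,
        Sᵀ * S = 1 ∧ S.det = 1 ∧ S * T * S⁻¹ = T⁻¹) ↔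
      (¬ (n % 4 = 2) ∨
        ∃ v : Fin n → ℝ, v ≠ 0 ∧ (T.mulVec v = v ∨ T.mulVec v = -v)) :=
  real_in_SOn_iff_general n T hTo
end

section
/- Let T be an orthogonal transformation of ℝⁿ and suppose the complexification of T interchanges the eigenspaces V_θ and V_{−θ} under conjugation in the following sense: if S is orthogonal with STS⁻¹ = T⁻¹, T has only eigenvalues e^{±iθ} (θ ≠ 0, π) each of multiplicity m with n = 2m, then det S = (−1)^m. -/
/-!
Over `ℂ`, `ℂⁿ = W ⊕ W̄`, where `W` is the generalized `e^{iθ}`-eigenspace of `T` and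
its complex conjugate `W̄` is the generalized `e^{-iθ}`-eigenspace; both have dimension `m`.
Since `T S T = S`, the real matrix `S` maps `W` into `W̄` and `W̄` into `W`. In a basis
`(u, ū)` adapted to the splitting, `S` therefore has block matrix `[[0, B̄], [B, 0]]`, so
`det S = (-1)^m |det B|²`; as `det S = ±1`, this forces `det S = (-1)^m`.
-/

open Matrix Polynomial

theorem neg_one_pow_mul_neg_one_pow {R : Type*} [Monoid R] [HasDistribNeg R] (m : ℕ) :
    (-1 : R) ^ m * (-1) ^ m = 1 := by
  rw [← pow_add, ← two_mul, pow_mul, neg_one_sq, one_pow]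

theorem Matrix.det_fromBlocks_zero_zero {κ R : Type*} [Fintype κ] [DecidableEq κ] [CommRing R]
    (B C : Matrix κ κ R) :
    (fromBlocks 0 B C 0).det = (-1) ^ Fintype.card κ * B.det * C.det := by
  have hrot : (fromBlocks 0 1 (-1) 0 : Matrix (κ ⊕ κ) (κ ⊕ κ) R) =
      fromBlocks 1 1 0 1 * fromBlocks 1 0 (-1) 1 * fromBlocks 1 1 0 1 := by
    simp [fromBlocks_multiply]
  have hdet_rot : (fromBlocks 0 1 (-1) 0 : Matrix (κ ⊕ κ) (κ ⊕ κ) R).det = 1 := by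
    simp [hrot]
  calc (fromBlocks 0 B C 0).det = (fromBlocks 0 1 (-1) 0 * fromBlocks (-C) 0 0 B).det := by
        simp [fromBlocks_multiply]
    _ = (-1) ^ Fintype.card κ * B.det * C.det := by
        rw [det_mul, hdet_rot, det_fromBlocks_zero₂₁, det_neg]
        ring

section StarBasis

open Module

variable {R M κ : Type*} [CommRing R] [StarRing R] [AddCommGroup M] [StarAddMonoid M] [Module R M]
  [StarModule R M] [Fintype κ]

theorem Module.Basis.repr_star_of_star_eq_swap (b : Basis (κ ⊕ κ) R M)
    (hb : ∀ x, star (b x) = b x.swap) (v : M) (x : κ ⊕ κ) :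
    b.repr (star v) x = star (b.repr v x.swap) := by
  have hstar : star v = ∑ y, star (b.repr v y.swap) • b y := by
    conv_lhs => rw [← b.sum_repr v]
    simp only [star_sum, star_smul, hb]
    exact Fintype.sum_equiv (Equiv.sumComm κ κ) _ _ (fun y => by simp)
  rw [hstar, b.repr_sum_self]

theorem LinearMap.toMatrix_swap_swap_of_star_eq_swap [DecidableEq κ] (b : Basis (κ ⊕ κ) R M)
    (hb : ∀ x, star (b x) = b x.swap) (f : M →ₗ[R] M) (hf : ∀ v, f (star v) = star (f v))
    (x y : κ ⊕ κ) :
    LinearMap.toMatrix b b f x.swap y.swap = star (LinearMap.toMatrix b b f x y) := by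
  rw [LinearMap.toMatrix_apply, LinearMap.toMatrix_apply, ← hb, hf,
    b.repr_star_of_star_eq_swap hb, Sum.swap_swap]

theorem LinearMap.exists_det_eq_neg_one_pow_mul_star_mul_self [DecidableEq κ]
    (b : Basis (κ ⊕ κ) R M)
    (hb : ∀ x, star (b x) = b x.swap) (f : M →ₗ[R] M) (hf : ∀ v, f (star v) = star (f v))
    (hfb : ∀ i, f (b (.inl i)) ∈ Submodule.span R (Set.range (b ∘ .inr))) :
    ∃ z : R, LinearMap.det f = (-1) ^ Fintype.card κ * (star z * z) := by
  have hzero : ∀ i j, LinearMap.toMatrix b b f (.inl i) (.inl j) = 0 := by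
    intro i j
    have hsupp := hfb j
    rw [Set.range_comp, b.mem_span_image] at hsupp
    rw [LinearMap.toMatrix_apply]
    exact Finsupp.notMem_support_iff.mp fun h => Sum.inr_ne_inl (hsupp h).choose_spec
  have hswap := toMatrix_swap_swap_of_star_eq_swap b hb f hf
  rw [← LinearMap.det_toMatrix b]
  generalize LinearMap.toMatrix b b f = N at hzero hswap ⊢
  have hN₁₁ : N.toBlocks₁₁ = 0 := by
    ext i j
    exact hzero i j
  have hN₂₂ : N.toBlocks₂₂ = 0 := by
    ext i j
    simpa [toBlocks₂₂, hzero] using hswap (.inl i) (.inl j)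
  set B := N.toBlocks₂₁
  have hN : N = fromBlocks 0 (B.map star) B 0 := by
    rw [← fromBlocks_toBlocks N, hN₁₁, hN₂₂]
    congr
    ext i j
    exact hswap (.inr i) (.inl j)
  refine ⟨B.det, ?_⟩
  rw [hN, det_fromBlocks_zero_zero, mul_assoc]
  congr 2
  exact (RingHom.map_det (starRingEnd R) B).symm

end StarBasis

section Complement

open Module Submodule

variable {K V : Type*} [Field K] [StarRing K] [AddCommGroup V] [StarAddMonoid V] [Module K V]
  [StarModule K V] {W W' : Submodule K V}

theorem Submodule.span_range_star_eq (hstar : ∀ v, star v ∈ W' ↔ v ∈ W) {ι : Type*}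
    {u : ι → V} (hu : span K (Set.range u) = W) : span K (Set.range (star ∘ u)) = W' := by
  rw [Set.range_comp]
  change span K ((starLinearEquiv K : V ≃ₗ⋆[K] V).toLinearMap '' _) = W'
  rw [span_image, hu]
  ext v
  refine ⟨fun ⟨y, hy, hyv⟩ => hyv ▸ (hstar y).2 hy,
    fun hv => ⟨star v, ?_, star_star v⟩⟩
  rwa [SetLike.mem_coe, ← hstar, star_star]

theorem exists_basis_star_eq_swap_of_isCompl [FiniteDimensional K V] (hWW' : IsCompl W W')
    (hstar : ∀ v, star v ∈ W' ↔ v ∈ W) :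
    ∃ b : Basis (Fin (finrank K W) ⊕ Fin (finrank K W)) K V, (∀ x, star (b x) = b x.swap) ∧
      (∀ i, b (.inl i) ∈ W) ∧ span K (Set.range (b ∘ .inr)) = W' := by
  set u := W.subtype ∘ finBasis K W
  have hu_span : span K (Set.range u) = W := by
    rw [Set.range_comp, span_image, (finBasis K W).span_eq, Submodule.map_top, range_subtype]
  have hu_li : LinearIndependent K u :=
    (finBasis K W).linearIndependent.map' W.subtype W.ker_subtype
  have hw_span := span_range_star_eq hstar hu_span
  have hw_li : LinearIndependent K (star ∘ u) :=
    hu_li.map_of_injective_injectiveₛ star (starAddEquiv : V ≃+ V).toAddMonoidHom star_injective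
      star_injective fun r v => by simp [star_smul]
  have hli : LinearIndependent K (Sum.elim u (star ∘ u)) :=
    hu_li.sum_type hw_li (by rw [hu_span, hw_span]; exact hWW'.disjoint)
  have hsp : ⊤ ≤ span K (Set.range (Sum.elim u (star ∘ u))) := by
    rw [Set.Sum.elim_range, span_union, hu_span, hw_span, hWW'.sup_eq_top]
  refine ⟨Basis.mk hli hsp, ?_, fun i => by simp [u], by simpa using hw_span⟩
  rintro (i | i) <;> simp

theorem two_mul_finrank_eq_of_isCompl_of_star_mem_iff [FiniteDimensional K V]
    (hWW' : IsCompl W W') (hstar : ∀ v, star v ∈ W' ↔ v ∈ W) :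
    2 * finrank K W = finrank K V := by
  obtain ⟨b, -⟩ := exists_basis_star_eq_swap_of_isCompl hWW' hstar
  rw [finrank_eq_card_basis b, Fintype.card_sum, Fintype.card_fin, two_mul]

theorem LinearMap.exists_det_eq_neg_one_pow_finrank_mul_star_mul_self [FiniteDimensional K V]
    (hWW' : IsCompl W W') (hstar : ∀ v, star v ∈ W' ↔ v ∈ W) (f : V →ₗ[K] V)
    (hf : ∀ v, f (star v) = star (f v)) (hfW : ∀ v ∈ W, f v ∈ W') :
    ∃ z : K, LinearMap.det f = (-1) ^ finrank K W * (star z * z) := by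
  obtain ⟨b, hb, hbW, hbW'⟩ := exists_basis_star_eq_swap_of_isCompl hWW' hstar
  simpa using f.exists_det_eq_neg_one_pow_mul_star_mul_self b hb hf fun i => hbW' ▸ hfW _ (hbW i)

end Complement

theorem Matrix.toLin'_map_ofReal_star {m n : Type*} [Fintype n] [DecidableEq n]
    (M : Matrix m n ℝ) (v : n → ℂ) :
    toLin' (M.map Complex.ofRealHom) (star v) = star (toLin' (M.map Complex.ofRealHom) v) := by
  ext i
  simp [mulVec, dotProduct]

theorem Matrix.neg_one_pow_finrank_mul_det_nonneg {ι : Type*} [Fintype ι] [DecidableEq ι]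
    {W W' : Submodule ℂ (ι → ℂ)} (hWW' : IsCompl W W')
    (hstar : ∀ v, star v ∈ W' ↔ v ∈ W)
    (S : Matrix ι ι ℝ) (hSW : ∀ v ∈ W, toLin' (S.map Complex.ofRealHom) v ∈ W') :
    0 ≤ (-1) ^ Module.finrank ℂ W * S.det := by
  obtain ⟨z, hz⟩ := LinearMap.exists_det_eq_neg_one_pow_finrank_mul_star_mul_self hWW' hstar
    (toLin' (S.map Complex.ofRealHom)) (toLin'_map_ofReal_star S) hSW
  have hdet : ((S.det : ℝ) : ℂ) = (S.map Complex.ofRealHom).det :=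
    RingHom.map_det Complex.ofRealHom S
  rw [LinearMap.det_toLin', ← hdet, Complex.star_def, Complex.conj_mul'] at hz
  have hreal : S.det = (-1) ^ Module.finrank ℂ W * ‖z‖ ^ 2 := by exact_mod_cast hz
  rw [hreal, ← mul_assoc, neg_one_pow_mul_neg_one_pow, one_mul]
  positivity

theorem Polynomial.isCompl_ker_aeval_of_isCoprime {R M : Type*} [CommRing R] [AddCommGroup M]
    [Module R M] (f : M →ₗ[R] M) {p q : R[X]} (hpq : IsCoprime p q) (hf : aeval f (p * q) = 0) :
    IsCompl (LinearMap.ker (aeval f p)) (LinearMap.ker (aeval f q)) :=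
  ⟨disjoint_ker_aeval_of_isCoprime f hpq, codisjoint_iff.mpr <| by
    rw [sup_ker_aeval_eq_ker_aeval_mul_of_coprime f hpq, hf, LinearMap.ker_zero]⟩

theorem LinearMap.isCompl_ker_aeval_X_sub_C_pow {K V : Type*} [Field K] [AddCommGroup V]
    [Module K V] [FiniteDimensional K V] (f : V →ₗ[K] V) {a b : K} (hab : a ≠ b) {m : ℕ}
    (hf : f.charpoly = ((X - C a) * (X - C b)) ^ m) :
    IsCompl (LinearMap.ker (aeval f ((X - C a) ^ m))) (LinearMap.ker (aeval f ((X - C b) ^ m))) :=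
  isCompl_ker_aeval_of_isCoprime f
    (isCoprime_X_sub_C_of_isUnit_sub (sub_ne_zero.mpr hab).isUnit).pow
    (by rw [← mul_pow, ← hf, LinearMap.aeval_self_charpoly])

theorem Polynomial.aeval_map_star_apply_star {R M : Type*} [CommRing R] [StarRing R]
    [AddCommGroup M] [StarAddMonoid M] [Module R M] [StarModule R M] (f : M →ₗ[R] M)
    (hf : ∀ v, f (star v) = star (f v)) (p : R[X]) (v : M) :
    aeval f (p.map (starRingEnd R)) (star v) = star (aeval f p v) := by
  have hpow : ∀ (k : ℕ) (v : M), (f ^ k) (star v) = star ((f ^ k) v) := by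
    intro k
    induction k with
    | zero => simp
    | succ k ih => simp [pow_succ', ih, hf]
  induction p using Polynomial.induction_on' with
  | add p q hp hq => simp [hp, hq]
  | monomial k c => simp [aeval_monomial, hpow, star_smul, starRingEnd_apply]

theorem Polynomial.star_mem_ker_aeval_X_sub_C_pow_iff {R M : Type*} [CommRing R] [StarRing R]
    [AddCommGroup M] [StarAddMonoid M] [Module R M] [StarModule R M] (f : M →ₗ[R] M)
    (hf : ∀ v, f (star v) = star (f v)) (a : R) (k : ℕ) (v : M) :
    star v ∈ LinearMap.ker (aeval f ((X - C (star a)) ^ k)) ↔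
      v ∈ LinearMap.ker (aeval f ((X - C a) ^ k)) := by
  rw [LinearMap.mem_ker, LinearMap.mem_ker, ← star_eq_zero, ← aeval_map_star_apply_star f hf]
  simp [starRingEnd_apply]

theorem sub_algebraMap_pow_mul_eq_smul {R A : Type*} [CommRing R] [Ring A] [Algebra R A]
    {t s : A} (hts : t * s * t = s) {a b : R} (hab : a * b = 1) (k : ℕ) :
    (t - algebraMap R A b) ^ k * s = (-b) ^ k • (t ^ k * s * (t - algebraMap R A a) ^ k) := by
  have hstep : (t - algebraMap R A b) * s = (-b) • (t * s * (t - algebraMap R A a)) := by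
    simp only [Algebra.algebraMap_eq_smul_one, sub_mul, mul_sub, smul_mul_assoc, one_mul,
      mul_smul_comm, mul_one, hts, smul_sub, smul_smul, neg_mul, mul_comm b a, hab, neg_smul,
      one_smul]
    abel
  have hcomm : Commute (t - algebraMap R A b) t := (Commute.refl t).sub_left (Algebra.commutes b t)
  induction k with
  | zero => simp
  | succ k ih =>
    calc (t - algebraMap R A b) ^ (k + 1) * s
        = (-b) ^ k • (t ^ k * ((t - algebraMap R A b) * s) * (t - algebraMap R A a) ^ k) := by
          rw [pow_succ', mul_assoc, ih, mul_smul_comm, ← mul_assoc, ← mul_assoc,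
            (hcomm.pow_right k).eq, mul_assoc (t ^ k)]
      _ = (-b) ^ (k + 1) • (t ^ (k + 1) * s * (t - algebraMap R A a) ^ (k + 1)) := by
          rw [hstep, pow_succ (-b), pow_succ t, pow_succ' (t - _), mul_smul, mul_smul_comm,
            smul_mul_assoc]
          simp only [mul_assoc]

theorem Module.End.mem_ker_aeval_X_sub_C_pow_of_mul_mul_eq {R M : Type*} [CommRing R]
    [AddCommGroup M] [Module R M] {f g : Module.End R M} (hfg : f * g * f = g) {a b : R}
    (hab : a * b = 1) (k : ℕ) {v : M} (hv : v ∈ LinearMap.ker (aeval f ((X - C a) ^ k))) :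
    g v ∈ LinearMap.ker (aeval f ((X - C b) ^ k)) := by
  simp only [LinearMap.mem_ker, map_pow, map_sub, aeval_X, aeval_C] at hv ⊢
  rw [← Module.End.mul_apply, sub_algebraMap_pow_mul_eq_smul hfg hab k]
  simp [hv]

theorem Matrix.mul_mul_eq_of_mul_mul_inv_eq_inv {n R : Type*} [Fintype n] [DecidableEq n]
    [CommRing R] {S T : Matrix n n R} (hS : IsUnit S.det) (hT : IsUnit T.det)
    (h : S * T * S⁻¹ = T⁻¹) : T * S * T = S :=
  calc T * S * T = T * (S * T * S⁻¹ * S) := by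
        rw [mul_assoc (S * T), nonsing_inv_mul _ hS, mul_one, mul_assoc]
    _ = S := by rw [h, ← mul_assoc, mul_nonsing_inv _ hT, one_mul]

theorem eq_neg_one_pow_of_mul_self_eq_one {R : Type*} [CommRing R] [LinearOrder R]
    [IsStrictOrderedRing R] {x : R} (m : ℕ) (hx : x * x = 1) (h : 0 ≤ (-1) ^ m * x) :
    x = (-1) ^ m := by
  have hsign := neg_one_pow_mul_neg_one_pow (R := R) m
  have hy : ((-1) ^ m * x) * ((-1) ^ m * x) = 1 := by rw [mul_mul_mul_comm, hsign, hx, one_mul]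
  have hy1 : (-1) ^ m * x = 1 :=
    (mul_self_eq_one_iff.mp hy).resolve_right fun hneg => by linarith
  calc x = (-1) ^ m * ((-1) ^ m * x) := by rw [← mul_assoc, hsign, one_mul]
    _ = (-1) ^ m := by rw [hy1, mul_one]

theorem Complex.exp_ofReal_mul_I_mul_star (θ : ℝ) : exp (θ * I) * star (exp (θ * I)) = 1 := by
  rw [Complex.star_def, mul_conj', norm_exp_ofReal_mul_I, ofReal_one, one_pow]

theorem Complex.map_X_sq_sub_two_cos_mul_X_add_one (θ : ℝ) :
    (X ^ 2 - C (2 * Real.cos θ) * X + 1 : ℝ[X]).map ofRealHom =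
      (X - C (exp (θ * I))) * (X - C (star (exp (θ * I)))) := by
  set a := exp (θ * I)
  have hsum : a + star a = (2 * Real.cos θ : ℝ) := by
    rw [Complex.star_def, add_conj, exp_ofReal_mul_I_re]
  calc _ = X ^ 2 - C (a + star a) * X + C (a * star a) := by
        rw [hsum, exp_ofReal_mul_I_mul_star]; simp
    _ = _ := by simp only [C_add, C_mul]; ring

/-- Let `T` be orthogonal with characteristic polynomial
`(X² − 2cos θ · X + 1)^m`, `0 < θ < π`, `n = 2m`.  Then any orthogonal `S`
with `S T S⁻¹ = T⁻¹` has determinant `(−1)^m`. -/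
theorem det_of_reversing_element (n m : ℕ) (θ : ℝ)
    (hθ0 : 0 < θ) (hθπ : θ < Real.pi) (hnm : n = 2 * m)
    (T : Matrix (Fin n) (Fin n) ℝ) (hTo : Tᵀ * T = 1)
    (hchar : T.charpoly = (X ^ 2 - C (2 * Real.cos θ) * X + 1) ^ m)
    (S : Matrix (Fin n) (Fin n) ℝ) (hSo : Sᵀ * S = 1)
    (hST : S * T * S⁻¹ = T⁻¹) :
    S.det = (-1 : ℝ) ^ m := by
  set a := Complex.exp (θ * Complex.I)
  set f := toLin' (T.map Complex.ofRealHom)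
  set g := toLin' (S.map Complex.ofRealHom)
  have ha : a ≠ star a := by
    rw [ne_comm, Ne, Complex.star_def, Complex.conj_eq_iff_im, Complex.exp_ofReal_mul_I_im]
    exact (Real.sin_pos_of_pos_of_lt_pi hθ0 hθπ).ne'
  have hf : f.charpoly = ((X - C a) * (X - C (star a))) ^ m := by
    rw [charpoly_toLin', charpoly_map, hchar, Polynomial.map_pow,
      Complex.map_X_sq_sub_two_cos_mul_X_add_one]
  have hWW' := f.isCompl_ker_aeval_X_sub_C_pow ha hf
  have hstar := star_mem_ker_aeval_X_sub_C_pow_iff f (toLin'_map_ofReal_star T) a m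
  have hfgf : f * g * f = g := by
    simp only [f, g, Module.End.mul_eq_comp, ← toLin'_mul, ← Matrix.map_mul,
      mul_mul_eq_of_mul_mul_inv_eq_inv (isUnit_det_of_left_inverse hSo)
        (isUnit_det_of_left_inverse hTo) hST]
  have hgW : ∀ v ∈ LinearMap.ker (aeval f ((X - C a) ^ m)), g v ∈ _ := fun v hv =>
    Module.End.mem_ker_aeval_X_sub_C_pow_of_mul_mul_eq hfgf
      (Complex.exp_ofReal_mul_I_mul_star θ) m hv
  have hm : Module.finrank ℂ (LinearMap.ker (aeval f ((X - C a) ^ m))) = m := by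
    have := two_mul_finrank_eq_of_isCompl_of_star_mem_iff hWW' hstar
    rw [Module.finrank_fin_fun] at this
    omega
  refine eq_neg_one_pow_of_mul_self_eq_one m (by simpa using congrArg det hSo) ?_
  simpa [hm] using neg_one_pow_finrank_mul_det_nonneg hWW' hstar S hgW
end
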